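/- For every real x ≥ 2 and every integer n with 2 ≤ n ≤ x, one has 0 ≤ (1/log x) · F(log(x/n)/log x) ≤ 1/(log n) − 1/(log(x²/n)) ≤ min{1/(log n), 2·log(x/n)/(log n)²}. -/

import Mathlib

noncomputable def F (u : ℝ) : ℝ :=
  ∫ y in Set.Ioi (0 : ℝ), Real.sinh (2 * u * y) / Real.cosh y ^ 2

/-!
Since `cosh y ≥ eʸ / 2`, the integrand of `F u` is at most `4 sinh (2uy) e⁻²ʸ`, whose integral is
`1 / (1 - u) - 1 / (1 + u)`. With `u = log (x / n) / log x` this majorant, divided by `log x`,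
is exactly `1 / log n - 1 / log (x² / n)`; the last inequality is elementary algebra.
-/

open MeasureTheory Real Set

lemma inv_cosh_sq_le_four_mul_exp (y : ℝ) : (cosh y ^ 2)⁻¹ ≤ 4 * exp (-2 * y) := by
  have hcosh : exp y / 2 ≤ cosh y := by
    rw [cosh_eq]
    linarith [exp_pos (-y)]
  have hsq : exp y ^ 2 / 4 ≤ cosh y ^ 2 := by
    nlinarith [exp_pos y]
  calc (cosh y ^ 2)⁻¹ ≤ (exp y ^ 2 / 4)⁻¹ := inv_anti₀ (by positivity) hsq
    _ = 4 * exp (-2 * y) := by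
      rw [inv_div, ← exp_nat_mul, neg_mul, exp_neg]
      push_cast
      ring

lemma sinh_mul_div_cosh_sq_le {a y : ℝ} (ha : 0 ≤ a) (hy : 0 ≤ y) :
    sinh (a * y) / cosh y ^ 2 ≤ 2 * (exp ((a - 2) * y) - exp ((-a - 2) * y)) :=
  calc sinh (a * y) / cosh y ^ 2 ≤ sinh (a * y) * (4 * exp (-2 * y)) :=
        mul_le_mul_of_nonneg_left (inv_cosh_sq_le_four_mul_exp y)
          (sinh_nonneg_iff.mpr (mul_nonneg ha hy))
    _ = 2 * (exp ((a - 2) * y) - exp ((-a - 2) * y)) := by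
      rw [sinh_eq, show (a - 2) * y = a * y + -2 * y by ring,
        show (-a - 2) * y = -(a * y) + -2 * y by ring, exp_add, exp_add]
      ring

lemma sinh_mul_div_cosh_sq_nonneg {a y : ℝ} (ha : 0 ≤ a) (hy : 0 ≤ y) :
    0 ≤ sinh (a * y) / cosh y ^ 2 :=
  div_nonneg (sinh_nonneg_iff.mpr (mul_nonneg ha hy)) (by positivity)

lemma F_nonneg {u : ℝ} (hu : 0 ≤ u) : 0 ≤ F u :=
  setIntegral_nonneg measurableSet_Ioi fun _ hy =>
    sinh_mul_div_cosh_sq_nonneg (by positivity) (le_of_lt hy)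

lemma F_le {u : ℝ} (hu0 : 0 ≤ u) (hu1 : u < 1) : F u ≤ 1 / (1 - u) - 1 / (1 + u) := by
  have hneg₁ : 2 * u - 2 < 0 := by linarith
  have hneg₂ : -(2 * u) - 2 < 0 := by linarith
  have hint₁ := integrableOn_exp_mul_Ioi hneg₁ 0
  have hint₂ := integrableOn_exp_mul_Ioi hneg₂ 0
  calc F u ≤ ∫ y in Ioi (0 : ℝ), 2 * (exp ((2 * u - 2) * y) - exp ((-(2 * u) - 2) * y)) := by
        refine integral_mono_of_nonneg ?_ ((hint₁.sub hint₂).const_mul 2) ?_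
        · filter_upwards [ae_restrict_mem measurableSet_Ioi] with y (hy : 0 < y)
          exact sinh_mul_div_cosh_sq_nonneg (by positivity) hy.le
        · filter_upwards [ae_restrict_mem measurableSet_Ioi] with y (hy : 0 < y)
          exact sinh_mul_div_cosh_sq_le (by positivity) hy.le
    _ = 1 / (1 - u) - 1 / (1 + u) := by
      rw [integral_const_mul, integral_sub hint₁ hint₂, integral_exp_mul_Ioi hneg₁,
        integral_exp_mul_Ioi hneg₂]
      simp only [mul_zero, exp_zero]
      rw [div_sub_div _ _ hneg₁.ne hneg₂.ne, div_sub_div _ _ (by linarith) (by linarith),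
        mul_div_assoc', div_eq_div_iff (mul_ne_zero hneg₁.ne hneg₂.ne) (by nlinarith)]
      ring

lemma one_div_sub_one_div_le_min {t L : ℝ} (ht : 0 < t) (htL : t ≤ L) :
    1 / t - 1 / (2 * L - t) ≤ min (1 / t) (2 * (L - t) / t ^ 2) := by
  have h2L : 0 < 2 * L - t := by linarith
  refine le_min ?_ ?_
  · linarith [one_div_pos.mpr h2L]
  · rw [div_sub_div _ _ ht.ne' h2L.ne', div_le_div_iff₀ (by positivity) (by positivity)]
    nlinarith [mul_nonneg ht.le (sq_nonneg (L - t))]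

theorem weight_inequalities (x : ℝ) (n : ℕ) (hn : 2 ≤ n) (hnx : (n : ℝ) ≤ x) :
    0 ≤ (1 / Real.log x) * F (Real.log (x / n) / Real.log x) ∧
    (1 / Real.log x) * F (Real.log (x / n) / Real.log x) ≤
      1 / Real.log n - 1 / Real.log (x ^ 2 / n) ∧
    1 / Real.log n - 1 / Real.log (x ^ 2 / n) ≤
      min (1 / Real.log n) (2 * Real.log (x / n) / (Real.log n) ^ 2) := by
  have hn1 : (1 : ℝ) < n := by exact_mod_cast hn
  have hn0 : (0 : ℝ) < n := by linarith
  have hx0 : 0 < x := by linarith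
  have ht : 0 < log n := log_pos hn1
  have htL : log n ≤ log x := log_le_log hn0 hnx
  have hL : 0 < log x := by linarith
  rw [log_div hx0.ne' hn0.ne', log_div (by positivity) hn0.ne', log_pow, Nat.cast_ofNat]
  have hu0 : 0 ≤ (log x - log n) / log x := div_nonneg (by linarith) hL.le
  have hu1 : (log x - log n) / log x < 1 := by rw [div_lt_one hL]; linarith
  refine ⟨mul_nonneg (by positivity) (F_nonneg hu0), ?_, one_div_sub_one_div_le_min ht htL⟩
  calc 1 / log x * F ((log x - log n) / log x)
      ≤ 1 / log x * (1 / (1 - (log x - log n) / log x) - 1 / (1 + (log x - log n) / log x)) :=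
        mul_le_mul_of_nonneg_left (F_le hu0 hu1) (by positivity)
    _ = 1 / log n - 1 / (2 * log x - log n) := by
        have h2L : 2 * log x - log n ≠ 0 := by linarith
        field_simp [ht.ne', hL.ne']
        ring
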